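/- Let r ≥ 3 be odd. There is a constant C(r) > 0 such that for every N in the range 2^{R−1} < N ≤ 2^R with R ∈ ℕ, the number of v ∈ {1, ..., N} with 2^{⌊√R⌋} dividing r^v − 1 is at most C(r) · N · 2^{−√R}. -/

import Mathlib

/-!
By lifting the exponent at `2`, the `2`-adic valuation of `r ^ v - 1` exceeds that of `v`
by at most the constant `T = v₂(r ^ 2 - 1)`. So `2 ^ k ∣ r ^ v - 1` forces `2 ^ (k - T) ∣ v`,
and at most `N / 2 ^ (k - T)` of the `v ≤ N` qualify; with `k = ⌊√R⌋` this is at most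
`2 ^ (T + 1) · N · 2 ^ (-√R)`.
-/

open scoped Finset

namespace Nat

variable {r : ℕ}

lemma padicValNat_two_pow_sub_one_le (h1r : 1 < r) (hodd : Odd r) {v : ℕ} (hv : v ≠ 0) :
    padicValNat 2 (r ^ v - 1) ≤ padicValNat 2 (r ^ 2 - 1) + padicValNat 2 v := by
  have hr : ¬2 ∣ r := hodd.not_two_dvd_nat
  have h2v := padicValNat.pow_two_sub_one h1r hr (by omega) (even_two_mul v)
  have h2 := padicValNat.pow_two_sub_one h1r hr two_ne_zero even_two
  rw [padicValNat.mul two_ne_zero hv, padicValNat_self] at h2v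
  rw [padicValNat_self] at h2
  have hdvd : r ^ v - 1 ∣ r ^ (2 * v) - 1 := by
    simpa [← pow_mul, mul_comm] using Nat.sub_dvd_pow_sub_pow (r ^ v) 1 2
  have hmono : padicValNat 2 (r ^ v - 1) ≤ padicValNat 2 (r ^ (2 * v) - 1) :=
    padicValNat_dvd_iff_le (Nat.sub_ne_zero_of_lt (Nat.one_lt_pow (by omega) h1r)) |>.mp
      (pow_padicValNat_dvd.trans hdvd)
  omega

lemma two_pow_sub_dvd_of_two_pow_dvd_pow_sub_one (h1r : 1 < r) (hodd : Odd r) {k v : ℕ}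
    (hv : v ≠ 0) (hk : 2 ^ k ∣ r ^ v - 1) : 2 ^ (k - padicValNat 2 (r ^ 2 - 1)) ∣ v := by
  have hk' : k ≤ padicValNat 2 (r ^ v - 1) :=
    padicValNat_dvd_iff_le (Nat.sub_ne_zero_of_lt (Nat.one_lt_pow hv h1r)) |>.mp hk
  have := padicValNat_two_pow_sub_one_le h1r hodd hv
  exact padicValNat_dvd_iff_le hv |>.mpr (by omega)

lemma card_filter_two_pow_dvd_pow_sub_one_le (h1r : 1 < r) (hodd : Odd r) (k N : ℕ) :
    #{v ∈ Finset.Icc 1 N | 2 ^ k ∣ r ^ v - 1} ≤ N / 2 ^ (k - padicValNat 2 (r ^ 2 - 1)) := by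
  rw [← Nat.Ioc_filter_dvd_card_eq_div]
  refine Finset.card_le_card fun v hv ↦ ?_
  simp only [Finset.mem_filter, Finset.mem_Icc, Finset.mem_Ioc] at hv ⊢
  exact ⟨⟨hv.1.1, hv.1.2⟩,
    two_pow_sub_dvd_of_two_pow_dvd_pow_sub_one h1r hodd (by omega) hv.2⟩

end Nat

lemma natCast_div_two_pow_floor_sub_le (a : ℝ) (N T : ℕ) :
    ((N / 2 ^ (⌊a⌋₊ - T) : ℕ) : ℝ) ≤ 2 ^ (T + 1) * N * (2 : ℝ) ^ (-a) := by
  have hexp : (2 : ℝ) ^ a ≤ 2 ^ (T + 1) * 2 ^ (⌊a⌋₊ - T) := by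
    rw [← pow_add, ← Real.rpow_natCast]
    refine Real.rpow_le_rpow_of_exponent_le one_le_two ?_
    have := Nat.lt_floor_add_one a
    have : (⌊a⌋₊ : ℝ) ≤ T + (⌊a⌋₊ - T : ℕ) := by exact_mod_cast le_add_tsub
    push_cast
    linarith
  calc ((N / 2 ^ (⌊a⌋₊ - T) : ℕ) : ℝ)
      ≤ N / 2 ^ (⌊a⌋₊ - T) := by exact_mod_cast Nat.cast_div_le
    _ ≤ 2 ^ (T + 1) * N * (2 : ℝ) ^ (-a) := by
      rw [Real.rpow_neg zero_le_two, div_le_iff₀ (by positivity)]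
      field_simp
      nlinarith [Real.rpow_pos_of_pos two_pos a, N.cast_nonneg (α := ℝ)]

theorem card_V1_bound (r : ℕ) (hr : 3 ≤ r) (hodd : Odd r) :
    ∃ C : ℝ, 0 < C ∧ ∀ R N : ℕ, 2 ^ (R - 1) < N → N ≤ 2 ^ R →
      (((Finset.Icc 1 N).filter
          (fun v => 2 ^ (Nat.floor (Real.sqrt R)) ∣ r ^ v - 1)).card : ℝ) ≤
        C * N * (2 : ℝ) ^ (-(Real.sqrt R)) := by
  set T := padicValNat 2 (r ^ 2 - 1)
  refine ⟨2 ^ (T + 1), by positivity, fun R N _ _ ↦ ?_⟩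
  calc (((Finset.Icc 1 N).filter (fun v => 2 ^ ⌊√R⌋₊ ∣ r ^ v - 1)).card : ℝ)
      ≤ ((N / 2 ^ (⌊√R⌋₊ - T) : ℕ) : ℝ) := by
        exact_mod_cast Nat.card_filter_two_pow_dvd_pow_sub_one_le (by omega) hodd _ N
    _ ≤ 2 ^ (T + 1) * N * (2 : ℝ) ^ (-√R) := natCast_div_two_pow_floor_sub_le _ N T
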